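/- arXiv:2206.14439 — 4 statements merged into one kernel-verified Lean document; each statement's English description precedes it below -/
import Mathlib

section
/- Lemma (deterministic core of Theorem 1). Let p, q, p', q' be positive probability densities on ℝ^d and let c₁, c₂ ≥ 1. Suppose that for all x ∈ ℝ^d, 1/c₁ ≤ q(x)/p(x) ≤ c₁ and 1/c₂ ≤ q'(x)/p'(x) ≤ c₂. Then ∫_{ℝ^d} |q'(x) − (p'(x)/p(x))·q(x)| dx ≤ 2(c₁ + c₂ − 2). -/
open MeasureTheory

noncomputable section

/-- A probability density on `ℝ^d`: measurable, nonnegative, integrating to 1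
w.r.t. Lebesgue measure. -/
def IsDensity (d : ℕ) (p : (Fin d → ℝ) → ℝ) : Prop :=
  Measurable p ∧ (∀ x, 0 ≤ p x) ∧ (∫ x, p x) = 1

/-- A positive probability density on `ℝ^d`. -/
def IsPosDensity (d : ℕ) (p : (Fin d → ℝ) → ℝ) : Prop :=
  IsDensity d p ∧ ∀ x, 0 < p x

/-! Both `q'` and `(p'/p)·q` equal `p'` times a ratio lying in `[1/c, c]`, and two such ratios
differ by at most `c₁ + c₂ - 2` because `1/c ≥ 2 - c`. Integrating against `p'` gives even the
bound `c₁ + c₂ - 2`. -/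

lemma two_sub_le_one_div {c : ℝ} (hc : 0 < c) : 2 - c ≤ 1 / c := by
  rw [le_div_iff₀ hc]
  nlinarith [sq_nonneg (c - 1)]

lemma abs_sub_le_of_one_div_le_of_le {a b r s : ℝ} (ha : 0 < a) (hb : 0 < b)
    (hr : 1 / a ≤ r ∧ r ≤ a) (hs : 1 / b ≤ s ∧ s ≤ b) : |s - r| ≤ a + b - 2 := by
  have := two_sub_le_one_div ha
  have := two_sub_le_one_div hb
  rw [abs_le]
  constructor <;> linarith [hr.1, hr.2, hs.1, hs.2]

lemma sub_div_mul_eq_div_sub_div_mul {p q p' q' : ℝ} (hp : p ≠ 0) (hp' : p' ≠ 0) :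
    q' - p' / p * q = (q' / p' - q / p) * p' := by
  field_simp

theorem det_core_thm1_general
    {d : ℕ} (p q p' q' : (Fin d → ℝ) → ℝ)
    (hp : IsPosDensity d p)
    (hp' : IsPosDensity d p')
    (c₁ c₂ : ℝ) (hc₁ : 1 ≤ c₁) (hc₂ : 1 ≤ c₂)
    (hsand₁ : ∀ x, 1 / c₁ ≤ q x / p x ∧ q x / p x ≤ c₁)
    (hsand₂ : ∀ x, 1 / c₂ ≤ q' x / p' x ∧ q' x / p' x ≤ c₂) :
    ∫ x, |q' x - (p' x / p x) * q x| ≤ 2 * (c₁ + c₂ - 2) := by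
  obtain ⟨-, hp_pos⟩ := hp
  obtain ⟨⟨-, -, hp'_one⟩, hp'_pos⟩ := hp'
  have hp'_int : Integrable p' := .of_integral_ne_zero (by simp [hp'_one])
  have hbound : ∀ x, |q' x - (p' x / p x) * q x| ≤ (c₁ + c₂ - 2) * p' x := fun x => by
    rw [sub_div_mul_eq_div_sub_div_mul (hp_pos x).ne' (hp'_pos x).ne', abs_mul,
      abs_of_pos (hp'_pos x)]
    exact mul_le_mul_of_nonneg_right (abs_sub_le_of_one_div_le_of_le (by linarith)
      (by linarith) (hsand₁ x) (hsand₂ x)) (hp'_pos x).le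
  calc ∫ x, |q' x - (p' x / p x) * q x|
      ≤ ∫ x, (c₁ + c₂ - 2) * p' x :=
        integral_mono_of_nonneg (.of_forall fun _ => abs_nonneg _) (hp'_int.const_mul _)
          (.of_forall hbound)
    _ = c₁ + c₂ - 2 := by rw [integral_const_mul, hp'_one, mul_one]
    _ ≤ 2 * (c₁ + c₂ - 2) := by linarith

/-- **Deterministic core of Theorem 1.** If `q/p` is sandwiched in `[1/c₁, c₁]`
and `q'/p'` in `[1/c₂, c₂]`, then `∫ |q' - (p'/p)·q| ≤ 2(c₁ + c₂ - 2)`. -/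
theorem det_core_thm1
    {d : ℕ} (p q p' q' : (Fin d → ℝ) → ℝ)
    (hp : IsPosDensity d p) (hq : IsPosDensity d q)
    (hp' : IsPosDensity d p') (hq' : IsPosDensity d q')
    (c₁ c₂ : ℝ) (hc₁ : 1 ≤ c₁) (hc₂ : 1 ≤ c₂)
    (hsand₁ : ∀ x, 1 / c₁ ≤ q x / p x ∧ q x / p x ≤ c₁)
    (hsand₂ : ∀ x, 1 / c₂ ≤ q' x / p' x ∧ q' x / p' x ≤ c₂) :
    ∫ x, |q' x - (p' x / p x) * q x| ≤ 2 * (c₁ + c₂ - 2) :=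
  det_core_thm1_general p q p' q' hp hp' c₁ c₂ hc₁ hc₂ hsand₁ hsand₂
end
end

section
/- Theorem (Thm. 4 of the paper: ratio consistency implies ratio stability). Let A be a learning algorithm that is (c_n, δ_n)-ratio consistent. Let μ₁, μ₂ be positive probability densities on ℝ^d with sup_x μ₂(x)/μ₁(x) < ∞, let n ≥ 2, and let Z₁ ∈ (ℝ^d)^n and Z₂ ∈ (ℝ^d)^{n−1} be random tuples (on a common probability space, not necessarily independent) whose laws are, respectively, the n-fold product of the measure with density μ₁ and the (n−1)-fold product of the measure with density μ₂. Then with probability at least 1 − δ_n − δ_{n−1}, sup_{x∈ℝ^d} |log(μ₁(x)/p_{A(Z₁)}(x)) − log(μ₂(x)/p_{A(Z₂)}(x))| ≤ log c_n + log c_{n−1}. In particular, if c_n and δ_n are nonincreasing in n, A is (2 log c_{n−1}, 2δ_{n−1})-ratio stable at these sample sizes. -/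
open MeasureTheory

noncomputable section

/-- The measure on `ℝ^d` with density `p` w.r.t. Lebesgue measure. -/
def densMeasure {d : ℕ} (p : (Fin d → ℝ) → ℝ) : Measure (Fin d → ℝ) :=
  volume.withDensity (fun x => ENNReal.ofReal (p x))

/-- The `n`-fold product of the measure on `ℝ^d` with density `p`. -/
def prodDens {d : ℕ} (n : ℕ) (p : (Fin d → ℝ) → ℝ) :
    Measure (Fin n → Fin d → ℝ) :=
  Measure.pi (fun _ : Fin n => densMeasure p)

/-- A learning algorithm: assigns to each `n` and each tuple `Z ∈ (ℝ^d)^n` a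
probability density on `ℝ^d`, measurably in `(Z, x)`. -/
structure LearnAlg (d : ℕ) where
  out : (n : ℕ) → (Fin n → Fin d → ℝ) → (Fin d → ℝ) → ℝ
  meas : ∀ n, Measurable (fun Zx : (Fin n → Fin d → ℝ) × (Fin d → ℝ) => out n Zx.1 Zx.2)
  dens : ∀ n Z, IsDensity d (out n Z)

/-- `(c_n, δ_n)`-ratio consistency: `c_n ≥ 1` and for every positive density `μ`
and every `n`, with probability at least `1 - δ_n` over `Z` drawn i.i.d. from `μ`,
`sup_x |log (p_{A(Z)}(x) / μ(x))| ≤ log c_n`. -/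
def RC {d : ℕ} (A : LearnAlg d) (c δ : ℕ → ℝ) : Prop :=
  (∀ n, 1 ≤ c n) ∧
  ∀ μ : (Fin d → ℝ) → ℝ, IsPosDensity d μ → ∀ n : ℕ,
    ENNReal.ofReal (1 - δ n) ≤
      prodDens n μ {Z | ∀ x, |Real.log (A.out n Z x / μ x)| ≤ Real.log (c n)}

/-!
On the event where both samples satisfy the ratio-consistency bound, the triangle inequality
for `log` gives the claimed bound; whatever the coupling of `Z₁` and `Z₂`, these two events have
probabilities at least `1 - δ n` and `1 - δ (n - 1)`, so a union bound concludes.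

The one subtlety is measurability: a consistency event is an intersection over uncountably many
`x`. Its complement is the projection of a Borel set, hence analytic, and analytic sets are
null-measurable for finite measures. The latter is the capacitability argument: if `f` maps the
Baire space onto the set, bounding the coordinates one at a time by `b 0, b 1, …` while keeping
the measure of the image above `r` produces the compact set `f '' ∏ Iic (b i)` of measure `≥ r`.
-/

open Filter Topology Set
open scoped ENNReal

namespace MeasureTheory

section

variable {X : Type*}

theorem setOf_forall_lt_succ_le_update (k m : ℕ) (b : ℕ → ℕ) :
    {σ : ℕ → ℕ | ∀ i < k + 1, σ i ≤ Function.update b k m i} =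
      {σ | (∀ i < k, σ i ≤ b i) ∧ σ k ≤ m} := by
  ext σ
  simp only [mem_ofPred_eq, Nat.lt_succ_iff_lt_or_eq, or_imp, forall_and, forall_eq,
    Function.update_self]
  refine and_congr (forall₂_congr fun i hi => ?_) Iff.rfl
  rw [Function.update_of_ne hi.ne]

theorem exists_lt_measure_image_cylinder_and_le [MeasurableSpace X] (ν : Measure X)
    (f : (ℕ → ℕ) → X) {k : ℕ} {b : ℕ → ℕ} {r : ℝ≥0∞}
    (hr : r < ν (f '' {σ | ∀ i < k, σ i ≤ b i})) :
    ∃ m, r < ν (f '' {σ | (∀ i < k, σ i ≤ b i) ∧ σ k ≤ m}) := by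
  have hunion : f '' {σ | ∀ i < k, σ i ≤ b i} =
      ⋃ m, f '' {σ | (∀ i < k, σ i ≤ b i) ∧ σ k ≤ m} := by
    rw [← image_iUnion]
    congr 1
    ext σ
    simpa using fun _ => ⟨σ k, le_rfl⟩
  have hmono : Monotone fun m => f '' {σ : ℕ → ℕ | (∀ i < k, σ i ≤ b i) ∧ σ k ≤ m} :=
    fun m m' hm => image_mono fun σ hσ => ⟨hσ.1, hσ.2.trans hm⟩
  rwa [hunion, hmono.measure_iUnion, lt_iSup_iff] at hr

theorem exists_forall_lt_measure_image_cylinder [MeasurableSpace X] (ν : Measure X)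
    (f : (ℕ → ℕ) → X) {r : ℝ≥0∞} (hr : r < ν (range f)) :
    ∃ b : ℕ → ℕ, ∀ k, r < ν (f '' {σ | ∀ i < k, σ i ≤ b i}) := by
  have step : ∀ (k : ℕ) (b : ℕ → ℕ), ∃ m, r < ν (f '' {σ | ∀ i < k, σ i ≤ b i}) →
      r < ν (f '' {σ | ∀ i < k + 1, σ i ≤ Function.update b k m i}) := by
    intro k b
    by_cases h : r < ν (f '' {σ | ∀ i < k, σ i ≤ b i})
    · obtain ⟨m, hm⟩ := exists_lt_measure_image_cylinder_and_le ν f h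
      exact ⟨m, fun _ => by rwa [setOf_forall_lt_succ_le_update]⟩
    · exact ⟨0, fun h' => absurd h' h⟩
  choose next hnext using step
  -- `β k` fixes the bounds below `k`, one coordinate at a time.
  let β : ℕ → ℕ → ℕ := fun k => Nat.rec 0 (fun k b => Function.update b k (next k b)) k
  have hβ : ∀ k, r < ν (f '' {σ | ∀ i < k, σ i ≤ β k i}) := by
    intro k
    induction k with
    | zero => simpa using hr
    | succ k ih => exact hnext k (β k) ih
  have hstable : ∀ k, ∀ i < k, β k i = β (i + 1) i := by
    intro k
    induction k with
    | zero => intro i hi; omega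
    | succ k ih =>
      intro i hi
      rcases Nat.lt_succ_iff_lt_or_eq.1 hi with hi | rfl
      · exact (Function.update_of_ne hi.ne _ _).trans (ih i hi)
      · rfl
  refine ⟨fun i => β (i + 1) i, fun k => ?_⟩
  convert hβ k using 5 with σ
  exact forall₂_congr fun i hi => by rw [hstable k i hi]

theorem iInter_closure_image_cylinder_subset [TopologicalSpace X] [T2Space X]
    [FirstCountableTopology X] {f : (ℕ → ℕ) → X} (hf : Continuous f) (b : ℕ → ℕ) :
    ⋂ k, closure (f '' {σ | ∀ i < k, σ i ≤ b i}) ⊆ f '' univ.pi fun i => Iic (b i) := by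
  intro y hy
  obtain ⟨V, hV⟩ := (𝓝 y).exists_antitone_basis
  have hpick : ∀ k, ∃ σ : ℕ → ℕ, (∀ i < k, σ i ≤ b i) ∧ f σ ∈ V k := by
    intro k
    obtain ⟨-, hxV, σ, hσ, rfl⟩ :=
      mem_closure_iff_nhds.1 (mem_iInter.1 hy k) (V k) (hV.1.mem_of_mem trivial)
    exact ⟨σ, hσ, hxV⟩
  choose σ hσb hσV using hpick
  -- Clamped at `b`, the `σ k` lie in a compact set and still agree with `σ k` below `k`.
  obtain ⟨z, hz, φ, hφ, hτ⟩ :=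
    (isCompact_univ_pi fun i => (finite_Iic (b i)).isCompact).tendsto_subseq
      (x := fun k i => min (σ k i) (b i)) fun k i _ => mem_Iic.2 (min_le_right _ _)
  have hσz : Tendsto (σ ∘ φ) atTop (𝓝 z) := by
    rw [tendsto_pi_nhds] at hτ ⊢
    intro i
    refine (hτ i).congr' ?_
    filter_upwards [eventually_gt_atTop i] with k hk
    exact min_eq_left (hσb _ _ (hk.trans_le (hφ.id_le k)))
  exact ⟨z, hz, tendsto_nhds_unique ((hf.tendsto z).comp hσz)
    ((hV.tendsto hσV).comp hφ.tendsto_atTop)⟩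

variable [TopologicalSpace X] [T2Space X] [FirstCountableTopology X] [MeasurableSpace X]
  [OpensMeasurableSpace X] (ν : Measure X) [IsFiniteMeasure ν] {s : Set X}

theorem AnalyticSet.exists_isCompact_subset_le_measure (hs : AnalyticSet s) {r : ℝ≥0∞}
    (hr : r < ν s) : ∃ K ⊆ s, IsCompact K ∧ r ≤ ν K := by
  rw [AnalyticSet] at hs
  obtain rfl | ⟨f, hf, rfl⟩ := hs
  · simp at hr
  obtain ⟨b, hb⟩ := exists_forall_lt_measure_image_cylinder ν f hr
  refine ⟨_, image_subset_range _ _,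
    (isCompact_univ_pi fun i => (finite_Iic (b i)).isCompact).image hf, ?_⟩
  have hanti : Antitone fun k => closure (f '' {σ | ∀ i < k, σ i ≤ b i}) :=
    fun k l hkl => closure_mono (image_mono fun σ hσ i hi => hσ i (hi.trans_le hkl))
  calc r ≤ ⨅ k, ν (closure (f '' {σ | ∀ i < k, σ i ≤ b i})) :=
        le_iInf fun k => (hb k).le.trans (measure_mono subset_closure)
    _ = ν (⋂ k, closure (f '' {σ | ∀ i < k, σ i ≤ b i})) :=
        (hanti.measure_iInter (fun _ => isClosed_closure.measurableSet.nullMeasurableSet)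
          ⟨0, measure_ne_top _ _⟩).symm
    _ ≤ _ := measure_mono (iInter_closure_image_cylinder_subset hf b)

theorem AnalyticSet.nullMeasurableSet (hs : AnalyticSet s) : NullMeasurableSet s ν := by
  rcases eq_zero_or_pos (ν s) with h | h
  · exact .of_null h
  obtain ⟨u, -, hu, hlim⟩ := exists_seq_strictMono_tendsto' h
  choose K hKs hK hKu using fun n => hs.exists_isCompact_subset_le_measure ν (hu n).2
  have hC : MeasurableSet (⋃ n, K n) := .iUnion fun n => (hK n).isClosed.measurableSet
  have hCs : ⋃ n, K n ⊆ s := iUnion_subset hKs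
  have hνC : ν s ≤ ν (⋃ n, K n) :=
    le_of_tendsto' hlim fun n => (hKu n).trans (measure_mono (subset_iUnion K n))
  have hnull : ν (s \ ⋃ n, K n) = 0 := by
    have hsplit := measure_inter_add_sdiff (μ := ν) s hC
    rw [inter_eq_right.2 hCs] at hsplit
    refine nonpos_iff_eq_zero.1 (ENNReal.le_of_add_le_add_left (measure_ne_top ν (⋃ n, K n)) ?_)
    rw [hsplit, add_zero]
    exact hνC
  rw [← union_sdiff_cancel hCs]
  exact hC.nullMeasurableSet.union (.of_null hnull)

end

theorem nullMeasurableSet_setOf_forall {X Y : Type*} [TopologicalSpace X] [PolishSpace X]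
    [MeasurableSpace X] [BorelSpace X] [MeasurableSpace Y] [StandardBorelSpace Y]
    {p : X → Y → Prop} (hp : MeasurableSet {q : X × Y | p q.1 q.2}) (ν : Measure X)
    [IsFiniteMeasure ν] : NullMeasurableSet {x | ∀ y, p x y} ν := by
  have hcompl : {x | ∀ y, p x y}ᶜ = Prod.fst '' {q : X × Y | p q.1 q.2}ᶜ := by
    ext x
    simp
  rw [← compl_compl {x | ∀ y, p x y}, hcompl]
  exact ((hp.compl.analyticSet_image measurable_fst).nullMeasurableSet ν).compl

theorem ofReal_sub_sub_le_measure_inter {Ω : Type*} [MeasurableSpace Ω] {P : Measure Ω}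
    [IsProbabilityMeasure P] {s t : Set Ω} (ht : NullMeasurableSet t P) {a b : ℝ}
    (hsa : ENNReal.ofReal (1 - a) ≤ P s) (htb : ENNReal.ofReal (1 - b) ≤ P t) :
    ENNReal.ofReal (1 - a - b) ≤ P (s ∩ t) := by
  have hs' : 1 - a ≤ P.real s := (ENNReal.ofReal_le_iff_le_toReal (measure_ne_top P s)).1 hsa
  have ht' : 1 - b ≤ P.real t := (ENNReal.ofReal_le_iff_le_toReal (measure_ne_top P t)).1 htb
  have hunion := measureReal_union_add_inter₀ (s := s) (μ := P) ht
  have hle := measureReal_le_one (μ := P) (s := s ∪ t)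
  rw [← ofReal_measureReal]
  exact ENNReal.ofReal_le_ofReal (by linarith)

end MeasureTheory

theorem abs_log_div_sub_log_div_le (a b p q : ℝ) :
    |Real.log (a / p) - Real.log (b / q)| ≤ |Real.log (p / a)| + |Real.log (q / b)| := by
  rw [← inv_div p a, ← inv_div q b, Real.log_inv, Real.log_inv, neg_sub_neg, abs_sub_comm]
  exact abs_sub _ _

namespace LearnAlg

variable {d : ℕ} (A : LearnAlg d) {μ : (Fin d → ℝ) → ℝ}

theorem nullMeasurableSet_forall_abs_log_div_le (hμ : Measurable μ) (n : ℕ) (t : ℝ)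
    (ν : Measure (Fin n → Fin d → ℝ)) [IsFiniteMeasure ν] :
    NullMeasurableSet {Z | ∀ x, |Real.log (A.out n Z x / μ x)| ≤ t} ν :=
  nullMeasurableSet_setOf_forall (p := fun Z x => |Real.log (A.out n Z x / μ x)| ≤ t)
    (measurableSet_le ((Real.measurable_log.comp ((A.meas n).div (hμ.comp measurable_snd))).abs)
      measurable_const) ν

end LearnAlg

theorem RC.ofReal_le_measure_preimage {d : ℕ} {A : LearnAlg d} {c δ : ℕ → ℝ} (hA : RC A c δ)
    {μ : (Fin d → ℝ) → ℝ} (hμ : IsPosDensity d μ) {n : ℕ} {Ω : Type*} [MeasurableSpace Ω]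
    {P : Measure Ω} [IsFiniteMeasure P] {Z : Ω → Fin n → Fin d → ℝ} (hZ : Measurable Z)
    (hlaw : P.map Z = prodDens n μ) :
    ENNReal.ofReal (1 - δ n) ≤
      P (Z ⁻¹' {Z | ∀ x, |Real.log (A.out n Z x / μ x)| ≤ Real.log (c n)}) := by
  rw [(hZ.measurePreserving P).measure_preimage
    (A.nullMeasurableSet_forall_abs_log_div_le hμ.1.1 n _ (P.map Z)), hlaw]
  exact hA.2 μ hμ n

theorem RC_implies_RS_general
    {d : ℕ} (A : LearnAlg d) (c δ : ℕ → ℝ) (hA : RC A c δ)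
    (μ₁ μ₂ : (Fin d → ℝ) → ℝ)
    (hμ₁ : IsPosDensity d μ₁) (hμ₂ : IsPosDensity d μ₂)
    (n : ℕ)
    {Ω : Type*} [MeasurableSpace Ω] (P : Measure Ω) [IsProbabilityMeasure P]
    (Z₁ : Ω → Fin n → Fin d → ℝ) (Z₂ : Ω → Fin (n - 1) → Fin d → ℝ)
    (hZ₁ : Measurable Z₁) (hZ₂ : Measurable Z₂)
    (hZ₁law : Measure.map Z₁ P = prodDens n μ₁)
    (hZ₂law : Measure.map Z₂ P = prodDens (n - 1) μ₂) :
    ENNReal.ofReal (1 - δ n - δ (n - 1)) ≤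
      P {ω | ∀ x, |Real.log (μ₁ x / A.out n (Z₁ ω) x)
                    - Real.log (μ₂ x / A.out (n - 1) (Z₂ ω) x)|
              ≤ Real.log (c n) + Real.log (c (n - 1))} := by
  have hE₂ : NullMeasurableSet (Z₂ ⁻¹' {Z | ∀ x,
      |Real.log (A.out (n - 1) Z x / μ₂ x)| ≤ Real.log (c (n - 1))}) P :=
    (A.nullMeasurableSet_forall_abs_log_div_le hμ₂.1.1 _ _ (P.map Z₂)).preimage
      (hZ₂.measurePreserving P).quasiMeasurePreserving
  refine (ofReal_sub_sub_le_measure_inter hE₂ (hA.ofReal_le_measure_preimage hμ₁ hZ₁ hZ₁law)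
    (hA.ofReal_le_measure_preimage hμ₂ hZ₂ hZ₂law)).trans (measure_mono ?_)
  rintro ω ⟨h₁, h₂⟩ x
  exact (abs_log_div_sub_log_div_le _ _ _ _).trans (add_le_add (h₁ x) (h₂ x))

/-- **Theorem 4: ratio consistency implies ratio stability.** -/
theorem RC_implies_RS
    {d : ℕ} (A : LearnAlg d) (c δ : ℕ → ℝ) (hA : RC A c δ)
    (μ₁ μ₂ : (Fin d → ℝ) → ℝ)
    (hμ₁ : IsPosDensity d μ₁) (hμ₂ : IsPosDensity d μ₂)
    (hbdd : BddAbove (Set.range fun x => μ₂ x / μ₁ x))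
    (n : ℕ) (hn : 2 ≤ n)
    {Ω : Type*} [MeasurableSpace Ω] (P : Measure Ω) [IsProbabilityMeasure P]
    (Z₁ : Ω → Fin n → Fin d → ℝ) (Z₂ : Ω → Fin (n - 1) → Fin d → ℝ)
    (hZ₁ : Measurable Z₁) (hZ₂ : Measurable Z₂)
    (hZ₁law : Measure.map Z₁ P = prodDens n μ₁)
    (hZ₂law : Measure.map Z₂ P = prodDens (n - 1) μ₂) :
    ENNReal.ofReal (1 - δ n - δ (n - 1)) ≤
      P {ω | ∀ x, |Real.log (μ₁ x / A.out n (Z₁ ω) x)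
                    - Real.log (μ₂ x / A.out (n - 1) (Z₂ ω) x)|
              ≤ Real.log (c n) + Real.log (c (n - 1))} :=
  RC_implies_RS_general A c δ hA μ₁ μ₂ hμ₁ hμ₂ n P Z₁ Z₂ hZ₁ hZ₂ hZ₁law hZ₂law
end
end

section
/- Theorem (second part of Thm. 6 of the paper, via Cantelli's inequality). Let p and q be positive probability densities on ℝ^d such that ∫_{ℝ^d} p(x)·(log(q(x)/p(x)))² dx ≤ ε, and let δ ∈ (0,1). Then the set {x ∈ ℝ^d : log(q(x)/p(x)) > √(ε(1−δ)/δ)} has measure at most δ under the probability measure with density p; i.e., with probability at least 1 − δ over x drawn from p, log(q(x)/p(x)) ≤ √(ε(1−δ)/δ). -/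
/-!
Under `x ∼ p` the log-ratio `Y = log (q/p)` has mean `-KL(p‖q) ≤ 0` (integrate
`p log (q/p) ≤ q - p`) and variance at most `E[Y²] ≤ ε`. Cantelli's inequality then bounds
`P(Y > t)` by `ε / (ε + t²)`, which is `δ` for `t = √(ε(1-δ)/δ)`.
-/

open MeasureTheory

noncomputable section

open ProbabilityTheory Real
open scoped ENNReal NNReal

theorem Real.mul_log_div_le_sub {a b : ℝ} (ha : 0 ≤ a) (hb : 0 < b) :
    a * log (b / a) ≤ b - a := by
  rcases ha.eq_or_lt with rfl | ha
  · simpa using hb.le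
  calc a * log (b / a) ≤ a * (b / a - 1) := by
        gcongr; exact log_le_sub_one_of_pos (by positivity)
    _ = b - a := by field_simp

theorem integral_mul_log_div_le_sub {α : Type*} [MeasurableSpace α] {μ : Measure α}
    {p q : α → ℝ} (hp : ∀ x, 0 ≤ p x) (hq : ∀ x, 0 < q x) (hpi : Integrable p μ)
    (hqi : Integrable q μ) (hpq : Integrable (fun x => p x * log (q x / p x)) μ) :
    ∫ x, p x * log (q x / p x) ∂μ ≤ ∫ x, q x ∂μ - ∫ x, p x ∂μ := by
  rw [← integral_sub hqi hpi]
  exact integral_mono hpq (hqi.sub hpi) fun x => mul_log_div_le_sub (hp x) (hq x)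

section Cantelli

variable {Ω : Type*} [MeasurableSpace Ω] {μ : Measure Ω} [IsProbabilityMeasure μ]
  {X : Ω → ℝ}

theorem measureReal_ge_le_variance_div_add_sq (hX : MemLp X 2 μ) {a : ℝ} (ha : 0 < a) :
    μ.real {ω | a ≤ X ω - μ[X]} ≤ Var[X; μ] / (Var[X; μ] + a ^ 2) := by
  set v := Var[X; μ]
  have hv : 0 ≤ v := variance_nonneg X μ
  -- Markov's inequality for `(X - E X + u)²`; the shift `u = v / a` optimizes the bound.
  set u := v / a
  have hua : u * a = v := div_mul_cancel₀ v ha.ne'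
  have hXi := hX.integrable one_le_two
  have hW : MemLp (fun ω => X ω - μ[X] + u) 2 μ :=
    (hX.sub (memLp_const _)).add (memLp_const _)
  have hWmean : ∫ ω, (X ω - μ[X] + u) ∂μ = u := by
    rw [integral_add (by fun_prop) (integrable_const u),
      integral_sub hXi (integrable_const _)]
    simp
  have hWvar : Var[fun ω => X ω - μ[X] + u; μ] = v := by
    rw [variance_add_const (X := fun ω => X ω - μ[X]) (hX.1.sub aestronglyMeasurable_const),
      variance_sub_const hX.1]
  have hWsq : ∫ ω, (X ω - μ[X] + u) ^ 2 ∂μ = v + u ^ 2 := by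
    have := variance_eq_sub hW
    simp only [Pi.pow_apply] at this
    rw [hWvar, hWmean] at this
    linarith
  have hsub : {ω | a ≤ X ω - μ[X]} ⊆ {ω | (a + u) ^ 2 ≤ (X ω - μ[X] + u) ^ 2} := by
    intro ω (hω : a ≤ X ω - μ[X])
    show (a + u) ^ 2 ≤ (X ω - μ[X] + u) ^ 2
    exact pow_le_pow_left₀ (by positivity) (by linarith) 2
  have hmarkov : (a + u) ^ 2 * μ.real {ω | a ≤ X ω - μ[X]} ≤ v + u ^ 2 :=
    calc (a + u) ^ 2 * μ.real {ω | a ≤ X ω - μ[X]}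
        ≤ (a + u) ^ 2 * μ.real {ω | (a + u) ^ 2 ≤ (X ω - μ[X] + u) ^ 2} := by
          gcongr
          exact measure_ne_top μ _
      _ ≤ ∫ ω, (X ω - μ[X] + u) ^ 2 ∂μ :=
          mul_meas_ge_le_integral_of_nonneg (ae_of_all _ fun ω => sq_nonneg _)
            hW.integrable_sq _
      _ = v + u ^ 2 := hWsq
  have hsq : (a + u) * a = v + a ^ 2 := by rw [add_mul, hua]; ring
  have hscaled : (v + a ^ 2) ^ 2 * μ.real {ω | a ≤ X ω - μ[X]} ≤ v * (v + a ^ 2) := by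
    rw [← hsq]
    calc ((a + u) * a) ^ 2 * μ.real {ω | a ≤ X ω - μ[X]}
        = a ^ 2 * ((a + u) ^ 2 * μ.real {ω | a ≤ X ω - μ[X]}) := by ring
      _ ≤ a ^ 2 * (v + u ^ 2) := by gcongr
      _ = v * ((a + u) * a) := by rw [← hua]; ring
  rw [le_div_iff₀ (by positivity)]
  exact le_of_mul_le_mul_left (by linarith [hscaled]) (by positivity : 0 < v + a ^ 2)

theorem measureReal_sqrt_lt_le_of_integral_nonpos (hX : MemLp X 2 μ) (hmean : μ[X] ≤ 0)
    {ε : ℝ} (hsq : μ[X ^ 2] ≤ ε) {δ : ℝ} (hδ0 : 0 < δ) (hδ1 : δ < 1) :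
    μ.real {ω | √(ε * (1 - δ) / δ) < X ω} ≤ δ := by
  have hsq_nonneg : 0 ≤ μ[X ^ 2] := integral_nonneg fun ω => sq_nonneg (X ω)
  rcases (hsq_nonneg.trans hsq).eq_or_lt with rfl | hε
  · have hX0 : X ^ 2 =ᵐ[μ] 0 :=
      (integral_eq_zero_iff_of_nonneg (fun ω => sq_nonneg (X ω)) hX.integrable_sq).1
        (le_antisymm hsq hsq_nonneg)
    have hnull : μ {ω | 0 < X ω} = 0 :=
      measure_mono_null (fun ω (hω : 0 < X ω) (h : X ω ^ 2 = 0) => hω.ne' (pow_eq_zero_iff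
        two_ne_zero |>.1 h)) hX0
    simp [measureReal_def, hnull, hδ0.le]
  set t := √(ε * (1 - δ) / δ)
  have ht2 : t ^ 2 = ε * (1 - δ) / δ := sq_sqrt (by have := sub_pos.2 hδ1; positivity)
  have ht : 0 < t := sqrt_pos.2 (by have := sub_pos.2 hδ1; positivity)
  have hv : Var[X; μ] ≤ ε := (variance_le_expectation_sq hX.1).trans hsq
  calc μ.real {ω | t < X ω} ≤ μ.real {ω | t ≤ X ω - μ[X]} :=
        measureReal_mono fun ω (hω : t < X ω) => show t ≤ X ω - μ[X] by linarith
    _ ≤ Var[X; μ] / (Var[X; μ] + t ^ 2) := measureReal_ge_le_variance_div_add_sq hX ht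
    _ ≤ ε / (ε + t ^ 2) := by
        rw [div_le_div_iff₀ (by have := variance_nonneg X μ; positivity) (by positivity)]
        nlinarith [variance_nonneg X μ]
    _ = δ := by rw [ht2]; field_simp; ring

end Cantelli

section densMeasure

variable {d : ℕ} {p : (Fin d → ℝ) → ℝ}

theorem integral_densMeasure (hpm : Measurable p) (hp : ∀ x, 0 ≤ p x)
    (f : (Fin d → ℝ) → ℝ) :
    ∫ x, f x ∂densMeasure p = ∫ x, p x * f x := by
  change ∫ x, f x ∂volume.withDensity (fun x => ((p x).toNNReal : ℝ≥0∞)) = _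
  rw [integral_withDensity_eq_integral_smul hpm.real_toNNReal]
  congr with x
  rw [NNReal.smul_def, Real.coe_toNNReal _ (hp x), smul_eq_mul]

theorem integrable_densMeasure_iff (hpm : Measurable p) (hp : ∀ x, 0 ≤ p x)
    {f : (Fin d → ℝ) → ℝ} :
    Integrable f (densMeasure p) ↔ Integrable (fun x => p x * f x) := by
  change Integrable f (volume.withDensity (fun x => ((p x).toNNReal : ℝ≥0∞))) ↔ _
  rw [integrable_withDensity_iff_integrable_smul hpm.real_toNNReal]
  simp only [NNReal.smul_def, Real.coe_toNNReal _ (hp _), smul_eq_mul]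

theorem IsDensity.integrable (hp : IsDensity d p) : Integrable p :=
  .of_integral_ne_zero (by simp [hp.2.2])

theorem IsDensity.isProbabilityMeasure_densMeasure (hp : IsDensity d p) :
    IsProbabilityMeasure (densMeasure p) := by
  constructor
  rw [densMeasure, withDensity_apply _ MeasurableSet.univ, Measure.restrict_univ,
    ← ofReal_integral_eq_lintegral_ofReal hp.integrable (ae_of_all _ hp.2.1), hp.2.2,
    ENNReal.ofReal_one]

end densMeasure

/-- **Second part of Theorem 6 (via Cantelli's inequality).** If the second
moment of `log (q/p)` under `p` is at most `ε`, then with probability at least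
`1 - δ` over `x ∼ p`, `log (q(x)/p(x)) ≤ √(ε(1-δ)/δ)`. -/
theorem log_ratio_tail_bound
    {d : ℕ} (p q : (Fin d → ℝ) → ℝ)
    (hp : IsPosDensity d p) (hq : IsPosDensity d q)
    (ε : ℝ)
    (hint : Integrable (fun x => p x * (Real.log (q x / p x)) ^ 2))
    (hε : ∫ x, p x * (Real.log (q x / p x)) ^ 2 ≤ ε)
    (δ : ℝ) (hδ0 : 0 < δ) (hδ1 : δ < 1) :
    densMeasure p {x | Real.sqrt (ε * (1 - δ) / δ) < Real.log (q x / p x)}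
      ≤ ENNReal.ofReal δ := by
  obtain ⟨hp, -⟩ := hp
  obtain ⟨hq, hq0⟩ := hq
  have := hp.isProbabilityMeasure_densMeasure
  have hpi := hp.integrable
  obtain ⟨hpm, hp0, hp1⟩ := hp
  set Y : (Fin d → ℝ) → ℝ := fun x => log (q x / p x)
  have hY : MemLp Y 2 (densMeasure p) :=
    (memLp_two_iff_integrable_sq (hq.1.div hpm).log.aestronglyMeasurable).2
      ((integrable_densMeasure_iff hpm hp0).2 hint)
  have hmean : ∫ x, Y x ∂densMeasure p ≤ 0 := by
    rw [integral_densMeasure hpm hp0]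
    calc ∫ x, p x * Y x ≤ (∫ x, q x) - ∫ x, p x :=
          integral_mul_log_div_le_sub hp0 hq0 hpi hq.integrable
            ((integrable_densMeasure_iff hpm hp0).1 (hY.integrable one_le_two))
      _ = 0 := by rw [hp1, hq.2.2, sub_self]
  have hsq : ∫ x, (Y ^ 2) x ∂densMeasure p ≤ ε := by
    rwa [integral_densMeasure hpm hp0]
  rw [← ofReal_measureReal]
  exact ENNReal.ofReal_le_ofReal
    (measureReal_sqrt_lt_le_of_integral_nonpos hY hmean hsq hδ0 hδ1)
end
end

section
/- Proposition (closed-form MMD between Gaussian KDE models, Appendix B.3 of the paper). Let x₁, …, x_N ∈ ℝ^d and 1 ≤ N' < N. Let p̂ be the density of the mixture (1/N) Σ_{i=1}^N N(x_i, I_d) and p̂' the density of (1/(N−N')) Σ_{i=N'+1}^N N(x_i, I_d). With the RBF kernel K(x,y) = exp(−‖x−y‖²/2), define MMD²(p̂', p̂) = E_{x,y∼p̂} K(x,y) − 2 E_{x∼p̂, y∼p̂'} K(x,y) + E_{x,y∼p̂'} K(x,y), where all pairs of samples are independent. Then MMD²(p̂', p̂) = 3^{−d/2} · [ (N'²/(N²(N−N')²))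 Σ_{i=N'+1}^N Σ_{j=N'+1}^N − ((N+N')/(N²(N−N'))) Σ_{i=1}^{N'} Σ_{j=N'+1}^N + (1/N²) Σ_{i=1}^N Σ_{j=1}^{N'} ] exp(−‖x_i − x_j‖²/6). -/
open MeasureTheory ProbabilityTheory

noncomputable section

/-- The standard Gaussian measure `N(a, I_d)` on `ℝ^d` (identity covariance),
realized as the product of one-dimensional Gaussians `N(aᵢ, 1)`. -/
def stdGaussianPi {d : ℕ} (a : Fin d → ℝ) : Measure (Fin d → ℝ) :=
  Measure.pi (fun i => gaussianReal (a i) 1)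

/-- The Gaussian KDE (unit bandwidth) on the points `xs`, as a measure: the
uniform mixture `(1/n) ∑ᵢ N(xsᵢ, I_d)`. -/
def kdeMeasure {d n : ℕ} (xs : Fin n → Fin d → ℝ) : Measure (Fin d → ℝ) :=
  (n : ENNReal)⁻¹ • ∑ i : Fin n, stdGaussianPi (xs i)

/-!
Completing the square coordinatewise, integrating the kernel `exp (-‖u - v‖² / s)` in `v`
against `N(b, I_d)` gives `(s / (s + 2)) ^ (d / 2) * exp (-‖u - b‖² / (s + 2))`: smoothing by a
unit Gaussian adds `2` to the denominator. Doing this in both variables, the kernel's expectation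
under `N(a, I_d) ⊗ N(b, I_d)` is `(s / (s + 4)) ^ (d / 2) * exp (-‖a - b‖² / (s + 4))`, which for
`s = 2` is `3 ^ (-d / 2) * exp (-‖a - b‖² / 6)`. Each of the three terms of the MMD is an average
of such expectations over pairs of KDE centres; splitting the index range at `N'` and collecting
coefficients gives the formula.
-/

open Real Finset

lemma integral_exp_neg_sq_div_gaussianReal {s : ℝ} (hs : 0 < s) (t m : ℝ) :
    ∫ x, exp (-(t - x) ^ 2 / s) ∂gaussianReal m 1 =
      √(s / (s + 2)) * exp (-(t - m) ^ 2 / (s + 2)) := by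
  set μ := (2 * t + s * m) / (s + 2)
  set b := (s + 2) / (2 * s)
  have hsquare : ∀ x, gaussianPDFReal m 1 x * exp (-(t - x) ^ 2 / s) =
      (√(2 * π))⁻¹ * exp (-(t - m) ^ 2 / (s + 2)) * exp (-b * (x - μ) ^ 2) := by
    intro x
    rw [gaussianPDFReal, NNReal.coe_one, mul_one, mul_assoc, ← exp_add, mul_assoc, ← exp_add]
    congr 2
    simp only [b, μ]
    field_simp
    ring
  have hshift : ∫ x, exp (-b * (x - μ) ^ 2) = √(π / b) :=
    (integral_sub_right_eq_self (fun x => exp (-b * x ^ 2)) μ).trans (integral_gaussian b)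
  have hsqrt : √(π / b) = √(2 * π) * √(s / (s + 2)) := by
    rw [← sqrt_mul (by positivity)]
    congr 1
    simp only [b]
    field_simp
  rw [integral_gaussianReal_eq_integral_smul one_ne_zero]
  simp_rw [smul_eq_mul, hsquare, integral_const_mul, hshift, hsqrt]
  field_simp

instance isProbabilityMeasure_stdGaussianPi {d : ℕ} (a : Fin d → ℝ) :
    IsProbabilityMeasure (stdGaussianPi a) := by
  unfold stdGaussianPi
  infer_instance

def gaussKernel {d : ℕ} (s : ℝ) (u v : Fin d → ℝ) : ℝ :=
  exp (-(∑ k, (u k - v k) ^ 2) / s)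

section GaussKernel

variable {d : ℕ} {s : ℝ}

lemma gaussKernel_comm (s : ℝ) (u v : Fin d → ℝ) : gaussKernel s u v = gaussKernel s v u := by
  simp only [gaussKernel, ← neg_sub (u _), neg_sq]

lemma gaussKernel_eq_prod (s : ℝ) (u v : Fin d → ℝ) :
    gaussKernel s u v = ∏ k, exp (-(u k - v k) ^ 2 / s) := by
  rw [gaussKernel, ← exp_sum, ← sum_neg_distrib, sum_div]

lemma gaussKernel_pos (s : ℝ) (u v : Fin d → ℝ) : 0 < gaussKernel s u v :=
  exp_pos _

lemma gaussKernel_le_one (hs : 0 ≤ s) (u v : Fin d → ℝ) : gaussKernel s u v ≤ 1 :=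
  exp_le_one_iff.mpr (div_nonpos_of_nonpos_of_nonneg (by simp only [neg_nonpos]; positivity) hs)

lemma integrable_gaussKernel (μ : Measure (Fin d → ℝ)) [IsFiniteMeasure μ] (hs : 0 ≤ s)
    (u : Fin d → ℝ) : Integrable (gaussKernel s u) μ := by
  refine (integrable_const (1 : ℝ)).mono' (Continuous.aestronglyMeasurable ?_)
    (ae_of_all _ fun v => ?_)
  · unfold gaussKernel
    fun_prop
  rw [norm_of_nonneg (gaussKernel_pos s u v).le]
  exact gaussKernel_le_one hs u v

lemma integral_gaussKernel_stdGaussianPi (hs : 0 < s) (u b : Fin d → ℝ) :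
    ∫ v, gaussKernel s u v ∂stdGaussianPi b =
      (s / (s + 2)) ^ ((d : ℝ) / 2) * gaussKernel (s + 2) u b := by
  simp_rw [gaussKernel_eq_prod]
  rw [stdGaussianPi, integral_fintype_prod_eq_prod (fun k x => exp (-(u k - x) ^ 2 / s))]
  simp_rw [integral_exp_neg_sq_div_gaussianReal hs, prod_mul_distrib, prod_const, card_univ,
    Fintype.card_fin]
  rw [sqrt_eq_rpow, ← rpow_natCast, ← rpow_mul (by positivity)]
  ring_nf

lemma integral_integral_gaussKernel_stdGaussianPi (hs : 0 < s) (a b : Fin d → ℝ) :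
    ∫ u, ∫ v, gaussKernel s u v ∂stdGaussianPi b ∂stdGaussianPi a =
      (s / (s + 4)) ^ ((d : ℝ) / 2) * gaussKernel (s + 4) a b := by
  simp_rw [integral_gaussKernel_stdGaussianPi hs, gaussKernel_comm (s + 2) _ b, integral_const_mul,
    integral_gaussKernel_stdGaussianPi (by positivity : 0 < s + 2), gaussKernel_comm _ b a]
  rw [← mul_assoc, ← mul_rpow (by positivity) (by positivity),
    div_mul_div_cancel₀ (by positivity), show s + 2 + 2 = s + 4 by ring]

lemma integral_kdeMeasure {n : ℕ} (xs : Fin n → Fin d → ℝ) {f : (Fin d → ℝ) → ℝ}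
    (hf : ∀ i, Integrable f (stdGaussianPi (xs i))) :
    ∫ u, f u ∂kdeMeasure xs = (n : ℝ)⁻¹ * ∑ i, ∫ u, f u ∂stdGaussianPi (xs i) := by
  rw [kdeMeasure, integral_smul_measure, integral_finsetSum_measure fun i _ => hf i, smul_eq_mul,
    ENNReal.toReal_inv, ENNReal.toReal_natCast]

lemma integral_integral_gaussKernel_kdeMeasure (hs : 0 < s) {n m : ℕ} (xs : Fin n → Fin d → ℝ)
    (ys : Fin m → Fin d → ℝ) :
    ∫ u, ∫ v, gaussKernel s u v ∂kdeMeasure ys ∂kdeMeasure xs =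
      (s / (s + 4)) ^ ((d : ℝ) / 2) *
        ((n : ℝ)⁻¹ * (m : ℝ)⁻¹ * ∑ i, ∑ j, gaussKernel (s + 4) (xs i) (ys j)) := by
  have hinner (u : Fin d → ℝ) : ∫ v, gaussKernel s u v ∂kdeMeasure ys =
      (m : ℝ)⁻¹ * ∑ j, ∫ v, gaussKernel s u v ∂stdGaussianPi (ys j) :=
    integral_kdeMeasure ys fun _ => integrable_gaussKernel _ hs.le u
  have hint (a b : Fin d → ℝ) :
      Integrable (fun u => ∫ v, gaussKernel s u v ∂stdGaussianPi b) (stdGaussianPi a) := by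
    simp_rw [integral_gaussKernel_stdGaussianPi hs, gaussKernel_comm _ _ b]
    exact (integrable_gaussKernel _ (by positivity) b).const_mul _
  simp_rw [hinner]
  rw [integral_kdeMeasure xs fun i =>
    (integrable_finsetSum _ fun j _ => hint (xs i) (ys j)).const_mul _]
  simp_rw [integral_const_mul, integral_finsetSum _ fun j _ => hint _ (ys j),
    integral_integral_gaussKernel_stdGaussianPi hs, ← mul_sum]
  ring

end GaussKernel

section TailSums

variable {M : Type*} [AddCommMonoid M] {N : ℕ}

lemma sum_filter_le_eq_sum_fin_sub (N' : ℕ) (f : Fin N → M) :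
    ∑ i ∈ univ.filter (fun i : Fin N => N' ≤ i.1), f i =
      ∑ i : Fin (N - N'), f ⟨N' + i.1, by omega⟩ := by
  symm
  refine sum_bij (fun i _ => ⟨N' + i.1, by omega⟩) (fun i _ => by simp) (fun i _ j _ h => ?_)
    (fun j hj => ?_) (fun _ _ => rfl)
  · simpa [Fin.ext_iff] using h
  · rw [mem_filter] at hj
    exact ⟨⟨j.1 - N', by omega⟩, mem_univ _, Fin.ext (by simp; omega)⟩

lemma sum_univ_eq_sum_filter_lt_add_sum_fin_sub (N' : ℕ) (f : Fin N → M) :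
    ∑ i, f i = ∑ i ∈ univ.filter (fun i : Fin N => i.1 < N'), f i +
      ∑ i : Fin (N - N'), f ⟨N' + i.1, by omega⟩ := by
  rw [← sum_filter_le_eq_sum_fin_sub,
    ← sum_filter_add_sum_filter_not univ (fun i : Fin N => i.1 < N')]
  simp only [not_lt]

end TailSums

/-- **Closed-form MMD between Gaussian KDE models** (Appendix B.3). With
`p̂ = (1/N) ∑_{i=1}^N N(xᵢ, I_d)`, `p̂' = (1/(N-N')) ∑_{i=N'+1}^N N(xᵢ, I_d)` and
the RBF kernel `K(x,y) = exp(-‖x-y‖²/2)`,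
`MMD²(p̂', p̂) = E_{p̂,p̂}K - 2E_{p̂,p̂'}K + E_{p̂',p̂'}K` has the stated closed form. -/
theorem mmd_kde_closed_form
    {d N N' : ℕ} (hN'N : N' < N)
    (x : Fin N → Fin d → ℝ) :
    (∫ u, ∫ v, Real.exp (-(∑ k, (u k - v k) ^ 2) / 2)
        ∂(kdeMeasure x) ∂(kdeMeasure x))
      - 2 * (∫ u, ∫ v, Real.exp (-(∑ k, (u k - v k) ^ 2) / 2)
          ∂(kdeMeasure (fun i : Fin (N - N') =>
              x ⟨N' + i.1, by have := i.isLt; omega⟩)) ∂(kdeMeasure x))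
      + (∫ u, ∫ v, Real.exp (-(∑ k, (u k - v k) ^ 2) / 2)
          ∂(kdeMeasure (fun i : Fin (N - N') =>
              x ⟨N' + i.1, by have := i.isLt; omega⟩))
          ∂(kdeMeasure (fun i : Fin (N - N') =>
              x ⟨N' + i.1, by have := i.isLt; omega⟩)))
    = (3 : ℝ) ^ (-(d : ℝ) / 2) *
        (((N' : ℝ) ^ 2 / ((N : ℝ) ^ 2 * ((N : ℝ) - (N' : ℝ)) ^ 2)) *
            ∑ i ∈ Finset.univ.filter (fun i : Fin N => N' ≤ i.1),
              ∑ j ∈ Finset.univ.filter (fun j : Fin N => N' ≤ j.1),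
                Real.exp (-(∑ k, (x i k - x j k) ^ 2) / 6)
          - (((N : ℝ) + (N' : ℝ)) / ((N : ℝ) ^ 2 * ((N : ℝ) - (N' : ℝ)))) *
            ∑ i ∈ Finset.univ.filter (fun i : Fin N => i.1 < N'),
              ∑ j ∈ Finset.univ.filter (fun j : Fin N => N' ≤ j.1),
                Real.exp (-(∑ k, (x i k - x j k) ^ 2) / 6)
          + (1 / (N : ℝ) ^ 2) *
            ∑ i : Fin N,
              ∑ j ∈ Finset.univ.filter (fun j : Fin N => j.1 < N'),
                Real.exp (-(∑ k, (x i k - x j k) ^ 2) / 6)) := by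
  have hconst : ((2 : ℝ) / 6) ^ ((d : ℝ) / 2) = 3 ^ (-(d : ℝ) / 2) := by
    rw [neg_div, rpow_neg zero_le_three, ← inv_rpow zero_le_three]
    norm_num
  have hN : (N : ℝ) ≠ 0 := Nat.cast_ne_zero.mpr (by omega)
  have hM : (N : ℝ) - N' ≠ 0 := sub_ne_zero.mpr (by exact_mod_cast hN'N.ne')
  -- Splitting every sum over `Fin N` at `N'` leaves both sides as combinations of the four block
  -- sums; `N` is pinned so that the split is not applied again to sums over `Fin (N - N')`.
  simp only [← gaussKernel.eq_1, integral_integral_gaussKernel_kdeMeasure two_pos,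
    show (2 : ℝ) + 4 = 6 by norm_num, hconst, sum_filter_le_eq_sum_fin_sub,
    sum_univ_eq_sum_filter_lt_add_sum_fin_sub (N := N) N', sum_add_distrib]
  rw [Nat.cast_sub hN'N.le]
  field_simp
  ring
end
end
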